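/- There exist ε > 0 and R₀ > 1/ε¹⁰ such that for all R > R₀: for every w ∈ K⁺ there is a constant M̃(w) > 1 with Mₙ ≤ M̃(w)^{(√3)ⁿ} for all n ≥ 0; consequently, for every w ∈ K⁺ there is a constant C(w) > 1 such that ‖Hⁿ(w)‖ ≤ C(w)^{(√3)ⁿ} for all n ≥ 0. -/

import Mathlib

open Complex Filter Topology

/-- The quadratic automorphism `H(x,y,z) = (xy + az, x² + by, x)` of `ℂ³`. -/
noncomputable def H (a b : ℂ) (w : ℂ × ℂ × ℂ) : ℂ × ℂ × ℂ :=
  (w.1 * w.2.1 + a * w.2.2, w.1 ^ 2 + b * w.2.1, w.1)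

/-- `V⁻ = {(x,y,z) : |xy| > max{R, 2|az|, |x|^{3/2}, (1/ε)|y|^{3/2}}}`. -/
noncomputable def Vminus (a : ℂ) (ε R : ℝ) : Set (ℂ × ℂ × ℂ) :=
  {w | ‖w.1 * w.2.1‖ >
    max R (max (2 * ‖a * w.2.2‖)
      (max (‖w.1‖ ^ ((3 : ℝ) / 2))
        ((1 / ε) * ‖w.2.1‖ ^ ((3 : ℝ) / 2))))}

/-- `U⁺ = ⋃_{n≥0} H⁻ⁿ(V⁻)`, i.e. the points whose forward orbit meets `V⁻`. -/
noncomputable def Uplus (a b : ℂ) (ε R : ℝ) : Set (ℂ × ℂ × ℂ) :=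
  ⋃ n : ℕ, (H a b)^[n] ⁻¹' Vminus a ε R

/-- `K⁺ = ℂ³ \ U⁺`. -/
noncomputable def Kplus (a b : ℂ) (ε R : ℝ) : Set (ℂ × ℂ × ℂ) :=
  (Uplus a b ε R)ᶜ

/-- `Mₙ = max{R, 2|azₙ|, |xₙ|^{3/2}, (1/ε)|yₙ|^{3/2}}` where `Hⁿ(w) = (xₙ,yₙ,zₙ)`. -/
noncomputable def Mseq (a b : ℂ) (ε R : ℝ) (w : ℂ × ℂ × ℂ) (n : ℕ) : ℝ :=
  max R (max (2 * ‖a * ((H a b)^[n] w).2.2‖)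
    (max (‖((H a b)^[n] w).1‖ ^ ((3 : ℝ) / 2))
      ((1 / ε) * ‖((H a b)^[n] w).2.1‖ ^ ((3 : ℝ) / 2))))

/-!
On `K⁺` the inequality `|xₙyₙ| ≤ Mₙ`, together with `|xₙ|^{3/2}, |yₙ|^{3/2}, 2|azₙ| ≲ Mₙ`, gives
`|xₙ₊₁| ≤ |xₙyₙ| + |azₙ| ≲ Mₙ` and `|yₙ₊₁| ≤ |xₙ|² + |b||yₙ| ≲ Mₙ^{4/3}`, hence `Mₙ₊₁ ≲ Mₙ²`.
Over two steps this improves: `|yₙ₊₂| ≲ |xₙ₊₁|² + |yₙ₊₁| ≲ Mₙ²` and `|xₙ₊₂| ≲ Mₙ₊₁ ≲ Mₙ²`, so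
`Mₙ₊₂ ≤ A Mₙ³`, and iterating gives `Mₙ ≤ T^{(√3)ⁿ}`. Finally every coordinate of `Hⁿ(w)` is
`O(Mₙ)`, for `zₙ` because `2|a||zₙ| ≤ Mₙ`.
-/

lemma add_mul_pow_le_of_pow_le {u v β K : ℝ} (hu : 0 ≤ u) (hv : 0 ≤ v) (hβ : 0 ≤ β) {n : ℕ}
    (huK : u ^ n ≤ K) (hvK : v ^ n ≤ K) : (u + β * v) ^ n ≤ (1 + β) ^ n * K := by
  have hmax : u + β * v ≤ (1 + β) * max u v := by
    nlinarith [le_max_left u v, le_max_right u v]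
  calc (u + β * v) ^ n ≤ ((1 + β) * max u v) ^ n := by gcongr
    _ = (1 + β) ^ n * max u v ^ n := mul_pow _ _ _
    _ ≤ (1 + β) ^ n * K := by
      gcongr
      rcases max_choice u v with h | h <;> rw [h] <;> assumption

lemma rpow_three_halves_le_iff {t K : ℝ} (ht : 0 ≤ t) (hK : 0 ≤ K) :
    t ^ ((3 : ℝ) / 2) ≤ K ↔ t ^ 3 ≤ K ^ 2 := by
  have hsq : (t ^ ((3 : ℝ) / 2)) ^ 2 = t ^ 3 := by
    rw [← Real.rpow_natCast _ 2, ← Real.rpow_mul ht, ← Real.rpow_natCast]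
    norm_num
  rw [← pow_le_pow_iff_left₀ (Real.rpow_nonneg ht _) hK two_ne_zero, hsq]

theorem exists_le_rpow_sqrt_three_pow {M : ℕ → ℝ} {A : ℝ} (hM : ∀ n, 0 ≤ M n) (hA : 1 ≤ A)
    (h : ∀ n, M (n + 2) ≤ A * M n ^ 3) : ∃ T > 1, ∀ n, M n ≤ T ^ (√3 ^ n) := by
  set s := √A
  have hs : 1 ≤ s := Real.one_le_sqrt.2 hA
  set T := max 2 (max (s * M 0) (s * M 1))
  have hT : 1 < T := lt_of_lt_of_le one_lt_two (le_max_left _ _)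
  -- With `s² = A` the recursion becomes `s Mₙ₊₂ ≤ (s Mₙ)³`.
  have key : ∀ n, s * M n ≤ T ^ (√3 ^ n) := by
    intro n
    induction n using Nat.twoStepInduction with
    | zero => simp [T]
    | one =>
      calc s * M 1 ≤ T := by simp [T]
        _ ≤ T ^ (√3 ^ 1) := Real.self_le_rpow_of_one_le hT.le (by simp [Real.one_le_sqrt])
    | more n ih _ =>
      calc s * M (n + 2) ≤ s * (A * M n ^ 3) := by gcongr; exact h n
        _ = (s * M n) ^ 3 := by rw [← Real.sq_sqrt (zero_le_one.trans hA)]; ring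
        _ ≤ (T ^ (√3 ^ n)) ^ 3 := by gcongr; exact mul_nonneg (by positivity) (hM n)
        _ = T ^ (√3 ^ (n + 2)) := by
          rw [← Real.rpow_natCast, ← Real.rpow_mul (by positivity), pow_add,
            Real.sq_sqrt zero_le_three]
          norm_num
  exact ⟨T, hT, fun n => (le_mul_of_one_le_left (hM n) hs).trans (key n)⟩

noncomputable def Mbound (a : ℂ) (ε R : ℝ) (p : ℂ × ℂ × ℂ) : ℝ :=
  max R (max (2 * ‖a * p.2.2‖)
    (max (‖p.1‖ ^ ((3 : ℝ) / 2)) ((1 / ε) * ‖p.2.1‖ ^ ((3 : ℝ) / 2))))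

section Mbound

variable {a b : ℂ} {ε R : ℝ} {p : ℂ × ℂ × ℂ}

lemma notMem_Vminus_iff : p ∉ Vminus a ε R ↔ ‖p.1 * p.2.1‖ ≤ Mbound a ε R p :=
  show ¬Mbound a ε R p < _ ↔ _ from not_lt

lemma mem_Kplus_iff {w : ℂ × ℂ × ℂ} : w ∈ Kplus a b ε R ↔ ∀ n, (H a b)^[n] w ∉ Vminus a ε R := by
  simp [Kplus, Uplus]

lemma Mbound_le_iff (hε : 0 < ε) {K : ℝ} (hK : 0 ≤ K) :
    Mbound a ε R p ≤ K ↔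
      R ≤ K ∧ 2 * ‖a * p.2.2‖ ≤ K ∧ ‖p.1‖ ^ 3 ≤ K ^ 2 ∧ ‖p.2.1‖ ^ 3 ≤ ε ^ 2 * K ^ 2 := by
  rw [Mbound, max_le_iff, max_le_iff, max_le_iff, rpow_three_halves_le_iff (norm_nonneg _) hK,
    one_div_mul_eq_div, div_le_iff₀' hε, rpow_three_halves_le_iff (norm_nonneg _) (by positivity),
    mul_pow]

lemma one_le_Mbound (hR : 1 ≤ R) : 1 ≤ Mbound a ε R p :=
  hR.trans (le_max_left _ _)

lemma norm_pow_three_le_Mbound_sq (hε : 0 < ε) (hR : 1 ≤ R) :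
    ‖p.1‖ ^ 3 ≤ Mbound a ε R p ^ 2 ∧ ‖p.2.1‖ ^ 3 ≤ ε ^ 2 * Mbound a ε R p ^ 2 :=
  let ⟨_, _, hx, hy⟩ := (Mbound_le_iff hε (zero_le_one.trans (one_le_Mbound hR))).1 le_rfl
  ⟨hx, hy⟩

lemma norm_fst_le_Mbound (hε : 0 < ε) (hR : 1 ≤ R) : ‖p.1‖ ≤ Mbound a ε R p := by
  have hM := one_le_Mbound (a := a) (ε := ε) (p := p) hR
  refine (pow_le_pow_iff_left₀ (norm_nonneg _) (by positivity) three_ne_zero).1 ?_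
  calc ‖p.1‖ ^ 3 ≤ Mbound a ε R p ^ 2 := (norm_pow_three_le_Mbound_sq hε hR).1
    _ ≤ Mbound a ε R p ^ 3 := pow_le_pow_right₀ hM (by norm_num)

lemma norm_fst_H_le (hp : p ∉ Vminus a ε R) : ‖(H a b p).1‖ ≤ 3 / 2 * Mbound a ε R p := by
  have hz : 2 * ‖a * p.2.2‖ ≤ Mbound a ε R p := (le_max_left _ _).trans (le_max_right _ _)
  have := norm_add_le (p.1 * p.2.1) (a * p.2.2)
  rw [notMem_Vminus_iff] at hp
  simp only [H]
  linarith

lemma norm_snd_H_le : ‖(H a b p).2.1‖ ≤ ‖p.1‖ ^ 2 + ‖b‖ * ‖p.2.1‖ :=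
  (norm_add_le _ _).trans_eq (by rw [norm_pow, norm_mul])

lemma norm_mul_thd_H : ‖a * (H a b p).2.2‖ = ‖a‖ * ‖p.1‖ :=
  norm_mul _ _

lemma norm_snd_H_pow_three_le (hε : 0 < ε) (hR : 1 ≤ R) :
    ‖(H a b p).2.1‖ ^ 3 ≤ (1 + ‖b‖) ^ 3 * ((1 + ε ^ 2) * Mbound a ε R p ^ 4) := by
  set m := Mbound a ε R p
  have hm : 1 ≤ m := one_le_Mbound hR
  obtain ⟨hx, hy⟩ := norm_pow_three_le_Mbound_sq (a := a) (p := p) hε hR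
  have hm24 : m ^ 2 ≤ m ^ 4 := pow_le_pow_right₀ hm (by norm_num)
  refine (pow_le_pow_left₀ (norm_nonneg _) norm_snd_H_le 3).trans
    (add_mul_pow_le_of_pow_le (by positivity) (norm_nonneg _) (norm_nonneg _) ?_ ?_)
  · calc (‖p.1‖ ^ 2) ^ 3 = (‖p.1‖ ^ 3) ^ 2 := by ring
      _ ≤ (m ^ 2) ^ 2 := by gcongr
      _ ≤ (1 + ε ^ 2) * m ^ 4 := by nlinarith [sq_nonneg ε, pow_nonneg (zero_le_one.trans hm) 4]
  · nlinarith [sq_nonneg ε, pow_nonneg (zero_le_one.trans hm) 4]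

end Mbound

section Growth

variable {a b : ℂ} {ε R : ℝ}

lemma eventually_Mbound_H_le (hε : 0 < ε) (hR : 1 ≤ R) :
    ∀ᶠ B in atTop, ∀ p, p ∉ Vminus a ε R → Mbound a ε R (H a b p) ≤ B * Mbound a ε R p ^ 2 := by
  have hsq := tendsto_pow_atTop (α := ℝ) two_ne_zero
  filter_upwards [eventually_ge_atTop 1, eventually_ge_atTop (2 * ‖a‖),
    hsq.eventually_ge_atTop (27 / 8),
    (hsq.atTop_mul_const (pow_pos hε 2)).eventually_ge_atTop ((1 + ‖b‖) ^ 3 * (1 + ε ^ 2))]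
    with B hB1 hBa hBx hBy p hp
  set m := Mbound a ε R p
  have hm : 1 ≤ m := one_le_Mbound hR
  have hm0 : 0 ≤ m := zero_le_one.trans hm
  have hx := norm_fst_H_le (b := b) hp
  have hy := norm_snd_H_pow_three_le (a := a) (b := b) (p := p) hε hR
  rw [Mbound_le_iff hε (by positivity), norm_mul_thd_H]
  refine ⟨?_, ?_, ?_, ?_⟩
  · have hRm : R ≤ m := le_max_left _ _
    nlinarith
  · calc 2 * (‖a‖ * ‖p.1‖) ≤ 2 * ‖a‖ * m := by
          rw [← mul_assoc]; gcongr; exact norm_fst_le_Mbound hε hR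
      _ ≤ B * m := by gcongr
      _ ≤ B * m ^ 2 := by gcongr; exact le_self_pow₀ hm two_ne_zero
  · calc ‖(H a b p).1‖ ^ 3 ≤ (3 / 2 * m) ^ 3 := by gcongr
      _ ≤ B ^ 2 * m ^ 4 := by
        nlinarith [pow_le_pow_right₀ hm (show 3 ≤ 4 by norm_num), pow_nonneg hm0 3]
      _ = (B * m ^ 2) ^ 2 := by ring
  · calc ‖(H a b p).2.1‖ ^ 3 ≤ (1 + ‖b‖) ^ 3 * (1 + ε ^ 2) * m ^ 4 := by linarith
      _ ≤ B ^ 2 * ε ^ 2 * m ^ 4 := by gcongr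
      _ = ε ^ 2 * (B * m ^ 2) ^ 2 := by ring

lemma eventually_Mbound_H_H_le (hε : 0 < ε) (hR : 1 ≤ R) :
    ∀ᶠ A in atTop, ∀ p, p ∉ Vminus a ε R → H a b p ∉ Vminus a ε R →
      Mbound a ε R (H a b (H a b p)) ≤ A * Mbound a ε R p ^ 3 := by
  obtain ⟨B, hB⟩ := (eventually_Mbound_H_le (a := a) (b := b) hε hR).exists
  have hsq := tendsto_pow_atTop (α := ℝ) two_ne_zero
  filter_upwards [eventually_ge_atTop 1, eventually_ge_atTop (3 * ‖a‖),
    hsq.eventually_ge_atTop (27 / 8 * B ^ 3),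
    (hsq.atTop_mul_const (pow_pos hε 2)).eventually_ge_atTop
      ((1 + ‖b‖) ^ 3 * ((9 / 4) ^ 3 + (1 + ‖b‖) ^ 3 * (1 + ε ^ 2)))]
    with A hA1 hAa hAx hAy p hp hHp
  set m := Mbound a ε R p
  have hm : 1 ≤ m := one_le_Mbound hR
  have hm0 : 0 ≤ m := zero_le_one.trans hm
  have hm3 : m ≤ m ^ 3 := le_self_pow₀ hm three_ne_zero
  have hx1 : ‖(H a b p).1‖ ≤ 3 / 2 * m := norm_fst_H_le hp
  have hy1 := norm_snd_H_pow_three_le (a := a) (b := b) (p := p) hε hR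
  have hx2 : ‖(H a b (H a b p)).1‖ ≤ 3 / 2 * (B * m ^ 2) :=
    (norm_fst_H_le hHp).trans (by gcongr; exact hB p hp)
  rw [Mbound_le_iff hε (by positivity), norm_mul_thd_H]
  refine ⟨?_, ?_, ?_, ?_⟩
  · have hRm : R ≤ m := le_max_left _ _
    nlinarith
  · calc 2 * (‖a‖ * ‖(H a b p).1‖) ≤ 3 * ‖a‖ * m := by nlinarith [norm_nonneg a]
      _ ≤ A * m ^ 3 := by gcongr
  · calc ‖(H a b (H a b p)).1‖ ^ 3 ≤ (3 / 2 * (B * m ^ 2)) ^ 3 :=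
          pow_le_pow_left₀ (norm_nonneg _) hx2 3
      _ = 27 / 8 * B ^ 3 * m ^ 6 := by ring
      _ ≤ A ^ 2 * m ^ 6 := by gcongr
      _ = (A * m ^ 3) ^ 2 := by ring
  · have hx1' : (‖(H a b p).1‖ ^ 2) ^ 3 ≤ ((9 / 4) ^ 3 + (1 + ‖b‖) ^ 3 * (1 + ε ^ 2)) * m ^ 6 := by
      calc (‖(H a b p).1‖ ^ 2) ^ 3 ≤ ((3 / 2 * m) ^ 2) ^ 3 := by gcongr
        _ = (9 / 4) ^ 3 * m ^ 6 := by ring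
        _ ≤ _ := by gcongr; exact le_add_of_nonneg_right (by positivity)
    have hy1' : ‖(H a b p).2.1‖ ^ 3 ≤ ((9 / 4) ^ 3 + (1 + ‖b‖) ^ 3 * (1 + ε ^ 2)) * m ^ 6 := by
      calc _ ≤ (1 + ‖b‖) ^ 3 * ((1 + ε ^ 2) * m ^ 4) := hy1
        _ ≤ (1 + ‖b‖) ^ 3 * ((1 + ε ^ 2) * m ^ 6) := by gcongr; norm_num
        _ ≤ _ := by nlinarith [pow_nonneg hm0 6]
    calc ‖(H a b (H a b p)).2.1‖ ^ 3 ≤ (‖(H a b p).1‖ ^ 2 + ‖b‖ * ‖(H a b p).2.1‖) ^ 3 :=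
          pow_le_pow_left₀ (norm_nonneg _) norm_snd_H_le 3
      _ ≤ (1 + ‖b‖) ^ 3 * (((9 / 4) ^ 3 + (1 + ‖b‖) ^ 3 * (1 + ε ^ 2)) * m ^ 6) :=
          add_mul_pow_le_of_pow_le (by positivity) (norm_nonneg _) (norm_nonneg _) hx1' hy1'
      _ ≤ A ^ 2 * ε ^ 2 * m ^ 6 := by rw [← mul_assoc]; gcongr
      _ = ε ^ 2 * (A * m ^ 3) ^ 2 := by ring

lemma Mseq_eq_Mbound (w : ℂ × ℂ × ℂ) (n : ℕ) :
    Mseq a b ε R w n = Mbound a ε R ((H a b)^[n] w) :=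
  rfl

lemma eventually_Mseq_add_two_le (hε : 0 < ε) (hR : 1 ≤ R) :
    ∀ᶠ A in atTop, ∀ w ∈ Kplus a b ε R, ∀ n,
      Mseq a b ε R w (n + 2) ≤ A * Mseq a b ε R w n ^ 3 := by
  filter_upwards [eventually_Mbound_H_H_le hε hR] with A hA w hw n
  rw [mem_Kplus_iff] at hw
  have hw1 := hw (n + 1)
  rw [Function.iterate_succ_apply'] at hw1
  rw [Mseq_eq_Mbound, Mseq_eq_Mbound, Function.iterate_succ_apply', Function.iterate_succ_apply']
  exact hA _ (hw n) hw1

lemma eventually_norm_le_mul_Mbound (ha : a ≠ 0) (hε : 0 < ε) (hR : 1 ≤ R) :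
    ∀ᶠ c in atTop, ∀ p, ‖p‖ ≤ c * Mbound a ε R p := by
  have ha' : 0 < ‖a‖ := norm_pos_iff.2 ha
  filter_upwards [eventually_ge_atTop (1 + ε ^ 2), eventually_ge_atTop (1 / (2 * ‖a‖))]
    with c hcε hca p
  set m := Mbound a ε R p
  have hm : 1 ≤ m := one_le_Mbound hR
  have hc : 1 ≤ c := le_trans (by nlinarith [sq_nonneg ε]) hcε
  obtain ⟨-, hz, -, hy⟩ := (Mbound_le_iff (a := a) (p := p) hε (zero_le_one.trans hm)).1 le_rfl
  rw [Prod.norm_def, Prod.norm_def]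
  refine max_le ?_ (max_le ?_ ?_)
  · exact (norm_fst_le_Mbound hε hR).trans (le_mul_of_one_le_left (by positivity) hc)
  · refine (pow_le_pow_iff_left₀ (norm_nonneg _) (by positivity) three_ne_zero).1 ?_
    calc ‖p.2.1‖ ^ 3 ≤ ε ^ 2 * m ^ 2 := hy
      _ ≤ c ^ 3 * m ^ 3 :=
        mul_le_mul (by linarith [le_self_pow₀ hc three_ne_zero])
          (pow_le_pow_right₀ hm (by norm_num)) (by positivity) (by positivity)
      _ = (c * m) ^ 3 := by ring
  · rw [norm_mul] at hz
    rw [div_le_iff₀ (by positivity)] at hca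
    nlinarith

end Growth

theorem stmt13_general (a b : ℂ) (ha : a ≠ 0) :
    ∃ ε > (0 : ℝ), ∃ R₀ > 1 / ε ^ 10, ∀ R > R₀, ∀ w ∈ Kplus a b ε R,
      (∃ M > (1 : ℝ), ∀ n : ℕ,
        Mseq a b ε R w n ≤ M ^ (Real.sqrt 3 ^ n)) ∧
      (∃ C > (1 : ℝ), ∀ n : ℕ,
        ‖(H a b)^[n] w‖ ≤ C ^ (Real.sqrt 3 ^ n)) := by
  refine ⟨1, one_pos, 2, by norm_num, fun R hR w hw => ?_⟩
  have hR1 : 1 ≤ R := by linarith [show (2 : ℝ) < R from hR]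
  obtain ⟨A, hA, hA1⟩ :=
    ((eventually_Mseq_add_two_le (a := a) (b := b) one_pos hR1).and (eventually_ge_atTop 1)).exists
  obtain ⟨T, hT, hMT⟩ := exists_le_rpow_sqrt_three_pow (M := Mseq a b 1 R w)
    (fun _ => zero_le_one.trans (one_le_Mbound hR1)) hA1 (hA w hw)
  obtain ⟨c, hc, hc1⟩ :=
    ((eventually_norm_le_mul_Mbound ha one_pos hR1).and (eventually_ge_atTop 1)).exists
  refine ⟨⟨T, hT, hMT⟩, c * T, one_lt_mul hc1 hT, fun n => ?_⟩
  have hn : 1 ≤ √3 ^ n := one_le_pow₀ (Real.one_le_sqrt.2 (by norm_num))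
  calc ‖(H a b)^[n] w‖ ≤ c * Mseq a b 1 R w n := by rw [Mseq_eq_Mbound]; exact hc _
    _ ≤ c ^ (√3 ^ n) * T ^ (√3 ^ n) :=
      mul_le_mul (Real.self_le_rpow_of_one_le hc1 hn) (hMT n)
        (zero_le_one.trans (one_le_Mbound hR1)) (by positivity)
    _ = (c * T) ^ (√3 ^ n) := (Real.mul_rpow (by positivity) (by positivity)).symm

/-- there exist `ε > 0` and `R₀ > 1/ε¹⁰` such that for all
`R > R₀`: for every `w ∈ K⁺` there is `M̃(w) > 1` with `Mₙ ≤ M̃(w)^{(√3)ⁿ}`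
for all `n ≥ 0`; consequently there is `C(w) > 1` such that
`‖Hⁿ(w)‖ ≤ C(w)^{(√3)ⁿ}` for all `n ≥ 0`. -/
theorem stmt13 (a b : ℂ) (ha : a ≠ 0) (hb : b ≠ 0) :
    ∃ ε > (0 : ℝ), ∃ R₀ > 1 / ε ^ 10, ∀ R > R₀, ∀ w ∈ Kplus a b ε R,
      (∃ M > (1 : ℝ), ∀ n : ℕ,
        Mseq a b ε R w n ≤ M ^ (Real.sqrt 3 ^ n)) ∧
      (∃ C > (1 : ℝ), ∀ n : ℕ,
        ‖(H a b)^[n] w‖ ≤ C ^ (Real.sqrt 3 ^ n)) :=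
  stmt13_general a b ha
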